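/- Under the hypotheses of the preceding minimization result (q integrable together with φ∘q and ∇φ∘q, φ differentiable and strictly convex with Bregman loss D_φ), if q̂ is a B-measurable random variable with D_φ(q, q̂) integrable and E[D_φ(q, q̂)] = E[D_φ(q, E(q | B))], then q̂ = E(q | B) P-almost surely. In particular, the minimizer of the expected Bregman loss over B-measurable random variables is unique up to a P-null set. -/

import Mathlib

open MeasureTheory InnerProductSpace

section BregmanAux
open Set

section aux
variable {E : Type*} [NormedAddCommGroup E] [InnerProductSpace ℝ E] [CompleteSpace E]

/-- strict first-order condition for strictly convex differentiable functions -/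
theorem bregman_pos_aux (φ : E → ℝ) (hdiff : Differentiable ℝ φ)
    (hconv : StrictConvexOn ℝ Set.univ φ) {x y : E} (hxy : x ≠ y) :
    0 < φ x - φ y - inner ℝ (x - y) (gradient φ y) := by
  set g : ℝ → ℝ := fun t => φ (y + t • (x - y)) with hg_def
  have hg' : ∀ t : ℝ, HasDerivAt g (fderiv ℝ φ (y + t • (x - y)) (x - y)) t := by
    intro t
    have hL : HasDerivAt (fun t : ℝ => y + t • (x - y)) (x - y) t := by
      simpa using (((hasDerivAt_id t).smul_const (x - y)).const_add y)
    exact (hdiff _).hasFDerivAt.comp_hasDerivAt t hL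
  have hgconv : StrictConvexOn ℝ Set.univ g := by
    refine ⟨convex_univ, fun a _ b _ hab c d hc hd hcd => ?_⟩
    have hpt : y + a • (x - y) ≠ y + b • (x - y) := by
      intro h
      have hxy' : x - y ≠ 0 := sub_ne_zero.2 hxy
      exact hab (smul_left_injective ℝ hxy' (add_left_cancel h))
    have harg : y + (c • a + d • b) • (x - y)
        = c • (y + a • (x - y)) + d • (y + b • (x - y)) := by
      have hcd' : c + d = 1 := hcd
      simp only [smul_eq_mul]
      rw [show c • (y + a • (x - y)) + d • (y + b • (x - y))
          = (c + d) • y + (c * a + d * b) • (x - y) by module, hcd', one_smul]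
    have h2 := hconv.2 (mem_univ (y + a • (x - y))) (mem_univ (y + b • (x - y))) hpt hc hd hcd
    rw [← harg] at h2
    simpa [hg_def, smul_eq_mul] using h2
  have hkey := hgconv.lt_slope_of_hasDerivAt (mem_univ (0:ℝ)) (mem_univ (1:ℝ)) one_pos (hg' 0)
  have hslope : slope g 0 1 = φ x - φ y := by
    have h1 : y + (1:ℝ) • (x - y) = x := by rw [one_smul]; abel
    simp [slope_def_field, hg_def, h1]
  have hfd : fderiv ℝ φ (y + (0:ℝ) • (x - y)) (x - y) = inner ℝ (x - y) (gradient φ y) := by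
    have h0 : y + (0:ℝ) • (x - y) = y := by simp
    rw [h0, (hdiff y).hasGradientAt.hasFDerivAt.fderiv, toDual_apply_apply, real_inner_comm]
  rw [hfd, hslope] at hkey
  linarith

theorem bregman_nonneg_aux (φ : E → ℝ) (hdiff : Differentiable ℝ φ)
    (hconv : StrictConvexOn ℝ Set.univ φ) (x y : E) :
    0 ≤ φ x - φ y - inner ℝ (x - y) (gradient φ y) := by
  rcases eq_or_ne x y with rfl | hxy
  · simp
  · exact (bregman_pos_aux φ hdiff hconv hxy).le

end aux

section aux2
variable {Ω : Type*} {B : MeasurableSpace Ω} {F : MeasurableSpace Ω} {P : Measure Ω}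
  [IsProbabilityMeasure P]
  {E : Type*} [NormedAddCommGroup E] [InnerProductSpace ℝ E] [FiniteDimensional ℝ E]

/-- conditional expectation commutes with inner product against a constant vector -/
theorem condexp_inner_const_aux (hB : B ≤ F) (f : Ω → E) (hf : Integrable f P) (c : E) :
    P[fun ω => (inner ℝ c (f ω) : ℝ)|B] =ᵐ[P] fun ω => (inner ℝ c ((P[f|B]) ω) : ℝ) := by
  haveI : SigmaFinite (P.trim hB) := inferInstance
  symm
  refine ae_eq_condExp_of_forall_setIntegral_eq hB (hf.const_inner c)
    (fun s _ _ => (integrable_condExp.const_inner c).integrableOn) (fun s hs hμs => ?_) ?_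
  · rw [integral_inner integrable_condExp.integrableOn c,
      integral_inner hf.integrableOn c, setIntegral_condExp hB hf hs]
  · exact (stronglyMeasurable_const.inner stronglyMeasurable_condExp).aestronglyMeasurable

/-- integral of inner product of a conditionally-centered integrable function against a bounded
`B`-measurable function vanishes -/
theorem integral_inner_eq_zero_aux (hB : B ≤ F) (f : Ω → E) (hf : Integrable f P)
    (hf0 : P[f|B] =ᵐ[P] 0) (w : Ω → E) (hw : StronglyMeasurable[B] w) (c : ℝ)
    (hwc : ∀ ω, ‖w ω‖ ≤ c) :
    ∫ ω, (inner ℝ (f ω) (w ω) : ℝ) ∂P = 0 := by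
  haveI : SigmaFinite (P.trim hB) := inferInstance
  set b := stdOrthonormalBasis ℝ E with hb
  have hpt : ∀ ω, (inner ℝ (f ω) (w ω) : ℝ)
      = ∑ i, (inner ℝ (b i) (w ω) : ℝ) * (inner ℝ (b i) (f ω) : ℝ) := by
    intro ω
    rw [← b.sum_inner_mul_inner (f ω) (w ω)]
    congr 1; ext i; rw [real_inner_comm (f ω) (b i)]; ring
  have hwi_meas : ∀ i, StronglyMeasurable[B] fun ω => (inner ℝ (b i) (w ω) : ℝ) :=
    fun i => stronglyMeasurable_const.inner hw
  have hwi_bd : ∀ i ω, ‖(inner ℝ (b i) (w ω) : ℝ)‖ ≤ c := by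
    intro i ω
    calc ‖(inner ℝ (b i) (w ω) : ℝ)‖ ≤ ‖b i‖ * ‖w ω‖ := norm_inner_le_norm _ _
    _ ≤ 1 * c := by
        rw [b.orthonormal.1 i]
        simpa using hwc ω
    _ = c := one_mul c
  have hfi_int : ∀ i, Integrable (fun ω => (inner ℝ (b i) (f ω) : ℝ)) P :=
    fun i => hf.const_inner (b i)
  have hterm_int : ∀ i, Integrable
      (fun ω => (inner ℝ (b i) (w ω) : ℝ) * (inner ℝ (b i) (f ω) : ℝ)) P := by
    intro i
    exact (hfi_int i).bdd_mul ((hwi_meas i).mono hB).aestronglyMeasurable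
      (Filter.Eventually.of_forall (hwi_bd i))
  calc ∫ ω, (inner ℝ (f ω) (w ω) : ℝ) ∂P
      = ∫ ω, ∑ i, (inner ℝ (b i) (w ω) : ℝ) * (inner ℝ (b i) (f ω) : ℝ) ∂P := by
        simp_rw [hpt]
    _ = ∑ i, ∫ ω, (inner ℝ (b i) (w ω) : ℝ) * (inner ℝ (b i) (f ω) : ℝ) ∂P :=
        integral_finset_sum _ (fun i _ => hterm_int i)
    _ = 0 := by
        refine Finset.sum_eq_zero fun i _ => ?_
        have hpull := condExp_stronglyMeasurable_mul_of_bound hB (hwi_meas i) (hfi_int i) c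
          (Filter.Eventually.of_forall (hwi_bd i))
        have hci := condexp_inner_const_aux hB f hf (b i)
        have h1 : ∫ ω, (inner ℝ (b i) (w ω) : ℝ) * (inner ℝ (b i) (f ω) : ℝ) ∂P
            = ∫ ω, (P[(fun ω => (inner ℝ (b i) (w ω) : ℝ))
                * (fun ω => (inner ℝ (b i) (f ω) : ℝ))|B]) ω ∂P :=
          (integral_condExp hB).symm
        rw [h1, integral_congr_ae hpull]
        have hz : (fun ω => (inner ℝ (b i) (w ω) : ℝ))
            * (P[fun ω => (inner ℝ (b i) (f ω) : ℝ)|B]) =ᵐ[P] (0 : Ω → ℝ) := by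
          filter_upwards [hci, hf0] with ω h1ω h2ω
          simp [Pi.mul_apply, h1ω, h2ω]
        rw [integral_congr_ae hz]
        simp

/-- main auxiliary version, with `B` declared before `F` for instance resolution -/
theorem bregman_main_aux
    [MeasurableSpace E] [BorelSpace E]
    (hB : B ≤ F)
    (φ : E → ℝ) (hdiff : Differentiable ℝ φ) (hconv : StrictConvexOn ℝ Set.univ φ)
    (D : E → E → ℝ)
    (hD : ∀ x y : E, D x y = φ x - φ y - inner ℝ (x - y) (gradient φ y))
    (q : Ω → E) (hq_int : Integrable q P)
    (qhat : Ω → E) (hqhat_meas : StronglyMeasurable[B] qhat)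
    (hqhat_int : Integrable (fun ω => D (q ω) (qhat ω)) P)
    (heq : ∫ ω, D (q ω) (qhat ω) ∂P = ∫ ω, D (q ω) ((P[q|B]) ω) ∂P) :
    qhat =ᵐ[P] P[q|B] := by
  haveI : SigmaFinite (P.trim hB) := inferInstance
  set m : Ω → E := P[q|B] with hm_def
  have hm_sm : StronglyMeasurable[B] m := stronglyMeasurable_condExp
  have hm_int : Integrable m P := integrable_condExp
  have hgrad_meas : Measurable (gradient φ) :=
    ((InnerProductSpace.toDual ℝ E).symm.continuous.measurable).comp (measurable_fderiv ℝ φ)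
  have hDpos : ∀ x y : E, x ≠ y → 0 < D x y := by
    intro x y hxy; rw [hD]; exact bregman_pos_aux φ hdiff hconv hxy
  have hDnonneg : ∀ x y : E, 0 ≤ D x y := by
    intro x y; rw [hD]; exact bregman_nonneg_aux φ hdiff hconv x y
  have hDzero : ∀ x y : E, D x y = 0 → x = y := by
    intro x y h
    by_contra hxy
    exact absurd h (ne_of_gt (hDpos x y hxy))
  by_cases hdqm : Integrable (fun ω => D (q ω) (m ω)) P
  · -- main case
    set Y : Ω → ℝ := fun ω => D (q ω) (qhat ω) - D (q ω) (m ω) with hY_def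
    have hY_int : Integrable Y P := hqhat_int.sub hdqm
    have hYint0 : ∫ ω, Y ω ∂P = 0 := by
      rw [hY_def]
      rw [integral_sub hqhat_int hdqm, heq, sub_self]
    set v : Ω → E := fun ω => gradient φ (m ω) - gradient φ (qhat ω) with hv_def
    have hv_sm : StronglyMeasurable[B] v :=
      ((hgrad_meas.comp hm_sm.measurable).sub
        (hgrad_meas.comp hqhat_meas.measurable)).stronglyMeasurable
    have hident : ∀ ω, Y ω = D (m ω) (qhat ω) + (inner ℝ (q ω - m ω) (v ω) : ℝ) := by
      intro ω
      simp only [hY_def, hv_def, hD, inner_sub_left, inner_sub_right]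
      ring
    -- the centered function
    have hf0 : P[fun ω => q ω - m ω|B] =ᵐ[P] 0 := by
      have h1 : P[fun ω => q ω - m ω|B] =ᵐ[P] P[q|B] - P[m|B] := condExp_sub hq_int hm_int B
      have h2 : P[m|B] = m := condExp_of_stronglyMeasurable hB hm_sm hm_int
      filter_upwards [h1] with ω hω
      rw [hω, h2]
      simp [hm_def]
    -- truncation sets
    set s : ℕ → Set Ω := fun n => {ω | ‖v ω‖ ≤ (n : ℝ)} with hs_def
    have hs_meas : ∀ n, MeasurableSet[B] (s n) :=
      fun n => MeasureTheory.StronglyMeasurable.measurableSet_le hv_sm.norm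
        stronglyMeasurable_const
    have hs_mono : Monotone s := by
      intro a b hab ω hω
      simp only [hs_def, Set.mem_setOf_eq] at hω ⊢
      exact le_trans hω (Nat.cast_le.2 hab)
    have hs_union : (⋃ n, s n) = univ := by
      refine eq_univ_of_forall fun ω => mem_iUnion.2 ?_
      obtain ⟨n, hn⟩ := exists_nat_ge ‖v ω‖
      exact ⟨n, hn⟩
    -- the inner-product term integrates to zero on each truncation set
    have hZ : ∀ n : ℕ, ∫ ω, (inner ℝ (q ω - m ω) ((s n).indicator v ω) : ℝ) ∂P = 0 := by
      intro n
      refine integral_inner_eq_zero_aux hB _ (hq_int.sub hm_int) hf0 _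
        (hv_sm.indicator (hs_meas n)) (n : ℝ) ?_
      intro ω
      by_cases hω : ω ∈ s n
      · rw [Set.indicator_of_mem hω]; exact hω
      · rw [Set.indicator_of_notMem hω]; simp
    have hZ_int : ∀ n : ℕ, Integrable
        (fun ω => (inner ℝ (q ω - m ω) ((s n).indicator v ω) : ℝ)) P := by
      intro n
      refine Integrable.mono' (((hq_int.sub hm_int).norm).const_mul (n : ℝ)) ?_ ?_
      · exact (hq_int.sub hm_int).aestronglyMeasurable.inner
          (((hv_sm.indicator (hs_meas n)).mono hB).aestronglyMeasurable)
      · refine Filter.Eventually.of_forall fun ω => ?_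
        calc ‖(inner ℝ (q ω - m ω) ((s n).indicator v ω) : ℝ)‖
            ≤ ‖q ω - m ω‖ * ‖(s n).indicator v ω‖ := norm_inner_le_norm _ _
          _ ≤ ‖q ω - m ω‖ * (n : ℝ) := by
              refine mul_le_mul_of_nonneg_left ?_ (norm_nonneg _)
              by_cases hω : ω ∈ s n
              · rw [Set.indicator_of_mem hω]; exact hω
              · rw [Set.indicator_of_notMem hω]; simp
          _ = (n : ℝ) * ‖q ω - m ω‖ := mul_comm _ _
    -- indicator of the Bregman term
    have hGn_eq : ∀ n ω, (s n).indicator (fun ω => D (m ω) (qhat ω)) ω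
        = (s n).indicator Y ω - (inner ℝ (q ω - m ω) ((s n).indicator v ω) : ℝ) := by
      intro n ω
      by_cases hω : ω ∈ s n
      · rw [Set.indicator_of_mem hω, Set.indicator_of_mem hω, Set.indicator_of_mem hω,
          hident ω]
        ring
      · rw [Set.indicator_of_notMem hω, Set.indicator_of_notMem hω,
          Set.indicator_of_notMem hω]
        simp
    have hGn_int : ∀ n : ℕ, Integrable ((s n).indicator (fun ω => D (m ω) (qhat ω))) P := by
      intro n
      refine ((hY_int.indicator (hB _ (hs_meas n))).sub (hZ_int n)).congr ?_
      exact Filter.Eventually.of_forall fun ω => (hGn_eq n ω).symm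
    have hGn_integral : ∀ n : ℕ, ∫ ω, (s n).indicator (fun ω => D (m ω) (qhat ω)) ω ∂P
        = ∫ ω in s n, Y ω ∂P := by
      intro n
      calc ∫ ω, (s n).indicator (fun ω => D (m ω) (qhat ω)) ω ∂P
          = ∫ ω, ((s n).indicator Y ω - (inner ℝ (q ω - m ω) ((s n).indicator v ω) : ℝ)) ∂P := by
            refine integral_congr_ae (Filter.Eventually.of_forall fun ω => hGn_eq n ω)
        _ = ∫ ω, (s n).indicator Y ω ∂P
            - ∫ ω, (inner ℝ (q ω - m ω) ((s n).indicator v ω) : ℝ) ∂P :=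
            integral_sub (hY_int.indicator (hB _ (hs_meas n))) (hZ_int n)
        _ = ∫ ω in s n, Y ω ∂P := by
            rw [hZ n, sub_zero, integral_indicator (hB _ (hs_meas n))]
    -- set integrals of Y tend to the full integral, which is 0
    have htendY : Filter.Tendsto (fun n => ∫ ω in s n, Y ω ∂P) Filter.atTop (nhds 0) := by
      have h := tendsto_setIntegral_of_monotone (fun n => hB _ (hs_meas n)) hs_mono
        (by rw [hs_union]; exact hY_int.integrableOn)
      rw [hs_union] at h
      simpa [hYint0] using h
    -- monotone convergence for the nonnegative Bregman term
    have hlim : ∫⁻ ω, ENNReal.ofReal (D (m ω) (qhat ω)) ∂P = 0 := by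
      have hmeas_n : ∀ n : ℕ, AEMeasurable
          (fun ω => ENNReal.ofReal ((s n).indicator (fun ω => D (m ω) (qhat ω)) ω)) P :=
        fun n => ENNReal.measurable_ofReal.comp_aemeasurable (hGn_int n).aemeasurable
      have hmono_pt : ∀ᵐ ω ∂P, Monotone
          (fun n => ENNReal.ofReal ((s n).indicator (fun ω => D (m ω) (qhat ω)) ω)) := by
        refine Filter.Eventually.of_forall fun ω a b hab => ?_
        refine ENNReal.ofReal_le_ofReal ?_
        exact Set.indicator_le_indicator_of_subset (hs_mono hab) (fun ω' => hDnonneg _ _) ω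
      have htend_pt : ∀ᵐ ω ∂P, Filter.Tendsto
          (fun n => ENNReal.ofReal ((s n).indicator (fun ω => D (m ω) (qhat ω)) ω))
          Filter.atTop (nhds (ENNReal.ofReal (D (m ω) (qhat ω)))) := by
        refine Filter.Eventually.of_forall fun ω => ?_
        obtain ⟨N, hN⟩ := exists_nat_ge ‖v ω‖
        refine tendsto_atTop_of_eventually_const (i₀ := N) fun n hn => ?_
        have hωn : ω ∈ s n := by
          simp only [hs_def, Set.mem_setOf_eq]
          exact le_trans hN (Nat.cast_le.2 hn)
        rw [Set.indicator_of_mem hωn]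
      have h1 := lintegral_tendsto_of_tendsto_of_monotone hmeas_n hmono_pt htend_pt
      have h2 : ∀ n : ℕ, ∫⁻ ω, ENNReal.ofReal ((s n).indicator (fun ω => D (m ω) (qhat ω)) ω) ∂P
          = ENNReal.ofReal (∫ ω in s n, Y ω ∂P) := by
        intro n
        rw [← hGn_integral n]
        exact (ofReal_integral_eq_lintegral_ofReal (hGn_int n)
          (Filter.Eventually.of_forall fun ω => Set.indicator_nonneg
            (fun ω' _ => hDnonneg _ _) ω)).symm
      simp_rw [h2] at h1
      have h3 : Filter.Tendsto (fun n => ENNReal.ofReal (∫ ω in s n, Y ω ∂P)) Filter.atTop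
          (nhds 0) := by
        have := (ENNReal.continuous_ofReal.tendsto 0).comp htendY
        simpa [Function.comp_def] using this
      exact tendsto_nhds_unique h1 h3
    -- conclude pointwise a.e.
    have hG_meas : Measurable fun ω => ENNReal.ofReal (D (m ω) (qhat ω)) := by
      have hmF : Measurable[F] m := (hm_sm.mono hB).measurable
      have hqhatF : Measurable[F] qhat := (hqhat_meas.mono hB).measurable
      have : Measurable fun ω => D (m ω) (qhat ω) := by
        simp only [hD]
        refine ((hdiff.continuous.measurable.comp hmF).sub
          (hdiff.continuous.measurable.comp hqhatF)).sub ?_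
        exact (hmF.sub hqhatF).inner (hgrad_meas.comp hqhatF)
      exact ENNReal.measurable_ofReal.comp this
    have hae : ∀ᵐ ω ∂P, ENNReal.ofReal (D (m ω) (qhat ω)) = 0 :=
      (lintegral_eq_zero_iff hG_meas).1 hlim
    filter_upwards [hae] with ω hω
    have hle : D (m ω) (qhat ω) ≤ 0 := by
      by_contra hc
      push_neg at hc
      rw [ENNReal.ofReal_eq_zero] at hω
      linarith
    have hzero : D (m ω) (qhat ω) = 0 := le_antisymm hle (hDnonneg _ _)
    exact (hDzero _ _ hzero).symm
  · -- degenerate case: `D (q, m)` not integrable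
    rw [integral_undef hdqm] at heq
    have h0 : (fun ω => D (q ω) (qhat ω)) =ᵐ[P] 0 :=
      (integral_eq_zero_iff_of_nonneg (fun ω => hDnonneg _ _) hqhat_int).1 heq
    have hqq : q =ᵐ[P] qhat := by
      filter_upwards [h0] with ω hω
      exact hDzero _ _ hω
    have hqhat_int' : Integrable qhat P := hq_int.congr hqq
    have hqev : P[qhat|B] = qhat := condExp_of_stronglyMeasurable hB hqhat_meas hqhat_int'
    have : m =ᵐ[P] qhat := by
      rw [hm_def]
      exact (condExp_congr_ae hqq).trans (by rw [hqev])
    exact this.symm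
end aux2

end BregmanAux

/-- Uniqueness of the Bregman-loss minimizer: if a `B`-measurable random variable `q̂`
achieves the same expected Bregman loss as the conditional expectation `E(q | B)`, then
`q̂ = E(q | B)` `P`-almost surely. -/
theorem bregman_loss_minimizer_unique
    {Ω : Type*} {B : MeasurableSpace Ω} {F : MeasurableSpace Ω} {P : Measure Ω} [IsProbabilityMeasure P]
    (hB : B ≤ F)
    {E : Type*} [NormedAddCommGroup E] [InnerProductSpace ℝ E] [FiniteDimensional ℝ E]
    [MeasurableSpace E] [BorelSpace E]
    (φ : E → ℝ) (hdiff : Differentiable ℝ φ) (hconv : StrictConvexOn ℝ Set.univ φ)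
    (D : E → E → ℝ)
    (hD : ∀ x y : E, D x y = φ x - φ y - inner ℝ (x - y) (gradient φ y))
    (q : Ω → E) (hq_meas : Measurable q)
    (hq_int : Integrable q P)
    (hφq_int : Integrable (fun ω => φ (q ω)) P)
    (hgradq_int : Integrable (fun ω => gradient φ (q ω)) P)
    (qhat : Ω → E) (hqhat_meas : StronglyMeasurable[B] qhat)
    (hqhat_int : Integrable (fun ω => D (q ω) (qhat ω)) P)
    (heq : ∫ ω, D (q ω) (qhat ω) ∂P = ∫ ω, D (q ω) ((P[q|B]) ω) ∂P) :
    qhat =ᵐ[P] P[q|B] := by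
  exact bregman_main_aux hB φ hdiff hconv D hD q hq_int qhat hqhat_meas hqhat_int heq
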